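/- arXiv:2204.12214 — 5 statements merged into one kernel-verified Lean document; each statement's English description precedes it below -/
import Mathlib

section
/- Let K be a field and q ∈ K nonzero, with q not a root of unity. For any n ≥ 1, the n × n matrix U with entries U_{j,s} = 1 - q^{2js} (for 1 ≤ j, s ≤ n) is invertible. -/
/-!
Put `v j = q ^ (2 (j + 1))`. Since `1 - v ^ (s + 1) = (1 - v) · (1 + v + ⋯ + v ^ s)` and the
geometric-sum polynomials `1 + X + ⋯ + X ^ s` are monic of degree `s`, pulling the factors `1 - v j`
out of the rows leaves a matrix with the Vandermonde determinant of `v`. Both factors are nonzero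
because `q` is not a root of unity: `v j ≠ 1`, and the `v j` are pairwise distinct.
-/

open Polynomial Finset

lemma Polynomial.natDegree_geom_sum_X {R : Type*} [Semiring R] [Nontrivial R] (n : ℕ) :
    (∑ i ∈ range (n + 1), (X : R[X]) ^ i).natDegree = n := by
  induction n with
  | zero => simp
  | succ k ih =>
    rw [sum_range_succ, natDegree_add_eq_right_of_natDegree_lt] <;> simp [ih]

lemma Matrix.det_one_sub_pow_succ {R : Type*} [CommRing R] {n : ℕ} (v : Fin n → R) :
    (Matrix.of fun j s : Fin n => 1 - v j ^ ((s : ℕ) + 1)).det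
      = (∏ j, (1 - v j)) * (Matrix.vandermonde v).det := by
  nontriviality R
  let p : Fin n → R[X] := fun s => ∑ i ∈ range ((s : ℕ) + 1), X ^ i
  have hfactor : (Matrix.of fun j s : Fin n => 1 - v j ^ ((s : ℕ) + 1))
      = Matrix.of fun j s => (1 - v j) * Matrix.of (fun j s => (p s).eval (v j)) j s := by
    ext j s
    simp [p, mul_neg_geom_sum]
  rw [hfactor, Matrix.det_mul_column,
    Matrix.det_eval_matrixOfPolynomials_eq_det_vandermonde v p
      (fun s => natDegree_geom_sum_X _) (fun s => monic_geom_sum_X s.val.succ_ne_zero)]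

lemma pow_injective_of_not_root_of_unity {G₀ : Type*} [GroupWithZero G₀] {q : G₀} (hq : q ≠ 0)
    (hroot : ∀ m : ℕ, 0 < m → q ^ m ≠ 1) : Function.Injective (q ^ · : ℕ → G₀) := by
  have hunit : ¬IsOfFinOrder (Units.mk0 q hq) := by
    rw [isOfFinOrder_iff_pow_eq_one]
    rintro ⟨m, hm, hpow⟩
    exact hroot m hm (by simpa using congrArg Units.val hpow)
  intro a b hab
  exact injective_pow_iff_not_isOfFinOrder.mpr hunit (Units.ext (by simpa using hab))

theorem stmt4_general (K : Type*) [Field K] (q : K) (hq : q ≠ 0)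
    (hroot : ∀ m : ℕ, 0 < m → q ^ m ≠ 1) (n : ℕ) :
    (Matrix.of fun j s : Fin n =>
      (1 : K) - q ^ (2 * ((j : ℕ) + 1) * ((s : ℕ) + 1))).det ≠ 0 := by
  let v : Fin n → K := fun j => q ^ (2 * ((j : ℕ) + 1))
  have hone_sub_ne_zero : ∀ j, 1 - v j ≠ 0 := fun j => sub_ne_zero.mpr (hroot _ (by positivity)).symm
  have hv_inj : Function.Injective v := fun a b hab =>
    Fin.ext (by simpa using pow_injective_of_not_root_of_unity hq hroot hab)
  have hentries : (Matrix.of fun j s : Fin n => (1 : K) - q ^ (2 * ((j : ℕ) + 1) * ((s : ℕ) + 1)))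
      = Matrix.of fun j s : Fin n => 1 - v j ^ ((s : ℕ) + 1) := by
    simp only [v, pow_mul]
  rw [hentries, Matrix.det_one_sub_pow_succ v]
  exact mul_ne_zero (prod_ne_zero_iff.mpr fun j _ => hone_sub_ne_zero j)
    (Matrix.det_vandermonde_ne_zero_iff.mpr hv_inj)

theorem stmt4 (K : Type*) [Field K] (q : K) (hq : q ≠ 0)
    (hroot : ∀ m : ℕ, 0 < m → q ^ m ≠ 1) (n : ℕ) (hn : 1 ≤ n) :
    (Matrix.of fun j s : Fin n =>
      (1 : K) - q ^ (2 * ((j : ℕ) + 1) * ((s : ℕ) + 1))).det ≠ 0 :=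
  stmt4_general K q hq hroot n
end

section
/- Let K be a field, q ∈ K nonzero and not a root of unity, and n ≥ 1. Suppose y₁, …, yₙ are elements of a K-vector space such that for every j ∈ {1, …, n} the combination Σ_{s=1}^{n} (1 - q^{-2js}) y_s lies in a fixed subspace V. Then each y_s lies in V. -/
/-- If `A` is an invertible matrix and `∑ j, A k j • w j = 0` for all `k`, then `w = 0`. -/
lemma aux_inv_matrix {K : Type*} [Field K] {M : Type*} [AddCommGroup M] [Module K M]
    {m : ℕ} (A : Matrix (Fin m) (Fin m) K) (hA : IsUnit A.det)
    (w : Fin m → M) (hw : ∀ k, ∑ j, A k j • w j = 0) : ∀ i, w i = 0 := by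
  intro i
  have key : w i = ∑ k, A⁻¹ i k • (∑ j, A k j • w j) := by
    simp_rw [Finset.smul_sum, smul_smul]
    rw [Finset.sum_comm]
    simp_rw [← Finset.sum_smul, ← Matrix.mul_apply, Matrix.nonsing_inv_mul A hA,
      Matrix.one_apply]
    simp
  simp [hw] at key
  exact key

theorem stmt5 (K : Type*) [Field K] (q : K) (hq : q ≠ 0)
    (hroot : ∀ m : ℕ, 0 < m → q ^ m ≠ 1)
    (W : Type*) [AddCommGroup W] [Module K W] (V : Submodule K W)
    (n : ℕ) (hn : 1 ≤ n) (y : Fin n → W)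
    (h : ∀ j : Fin n,
      (∑ s : Fin n, (1 - q ^ (-(2 : ℤ) * ((j : ℕ) + 1) * ((s : ℕ) + 1))) • y s) ∈ V) :
    ∀ s : Fin n, y s ∈ V := by
  set r : K := q ^ (-2 : ℤ) with hr_def
  have hr0 : r ≠ 0 := zpow_ne_zero _ hq
  have hrpow : ∀ m : ℕ, 0 < m → r ^ m ≠ 1 := by
    intro m hm heq
    rw [hr_def, ← zpow_natCast, ← zpow_mul] at heq
    have : (-2 : ℤ) * m = -(2 * m : ℕ) := by push_cast; ring
    rw [this, zpow_neg, inv_eq_one, zpow_natCast] at heq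
    exact hroot (2 * m) (by omega) heq
  -- nodes
  set t : Fin (n + 1) → K := fun i => r ^ (i : ℕ) with ht_def
  have htinj : Function.Injective t := by
    have key : ∀ a b : ℕ, a ≤ b → r ^ a = r ^ b → a = b := by
      intro a b hab heq
      by_contra hne
      have hba : 0 < b - a := by omega
      have h1 : r ^ a * r ^ (b - a) = r ^ b := by
        rw [← pow_add]
        congr 1
        omega
      have h2 : r ^ a * r ^ (b - a) = r ^ a * 1 := by rw [h1, mul_one, heq]
      have := mul_left_cancel₀ (pow_ne_zero a hr0) h2
      exact hrpow (b - a) hba this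
    intro a b hab
    rcases le_total (a : ℕ) (b : ℕ) with hle | hle
    · exact Fin.ext (key _ _ hle hab)
    · exact Fin.ext (key _ _ hle hab.symm).symm
  -- quotient
  set z : Fin n → W ⧸ V := fun s => V.mkQ (y s) with hz_def
  have hz : ∀ j : Fin n,
      ∑ s : Fin n, (1 - q ^ (-(2 : ℤ) * ((j : ℕ) + 1) * ((s : ℕ) + 1))) • z s = 0 := by
    intro j
    have h0 : V.mkQ (∑ s : Fin n,
        (1 - q ^ (-(2 : ℤ) * ((j : ℕ) + 1) * ((s : ℕ) + 1))) • y s) = 0 := by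
      rw [Submodule.mkQ_apply, Submodule.Quotient.mk_eq_zero]
      exact h j
    rw [map_sum] at h0
    simp only [map_smul] at h0
    exact h0
  -- coefficient identity
  have hcoef : ∀ (j s : ℕ), q ^ (-(2 : ℤ) * (j + 1) * (s + 1)) = (r ^ (s + 1)) ^ (j + 1) := by
    intro j s
    rw [hr_def, ← zpow_natCast _ (s + 1), ← zpow_mul, ← zpow_natCast _ (j + 1), ← zpow_mul]
    congr 1
    push_cast
    ring
  -- the extended vector
  set w : Fin (n + 1) → W ⧸ V := Fin.cons (∑ s, z s) (fun s => -z s) with hw_def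
  set A : Matrix (Fin (n + 1)) (Fin (n + 1)) K := Matrix.transpose (Matrix.vandermonde t) with hA_def
  have hAdet : IsUnit A.det := by
    rw [hA_def, Matrix.det_transpose, isUnit_iff_ne_zero,
      Matrix.det_vandermonde_ne_zero_iff]
    exact htinj
  have hsys : ∀ k, ∑ i, A k i • w i = 0 := by
    intro k
    have hsplit : ∑ i, A k i • w i
        = A k 0 • w 0 + ∑ s : Fin n, A k s.succ • w s.succ := Fin.sum_univ_succ _
    have hA0 : A k 0 = 1 := by simp [hA_def, Matrix.vandermonde, ht_def]
    have hAs : ∀ s : Fin n, A k s.succ = (r ^ ((s : ℕ) + 1)) ^ (k : ℕ) := by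
      intro s
      simp [hA_def, Matrix.vandermonde, ht_def]
    rw [hsplit, hA0]
    simp only [hAs, hw_def, Fin.cons_zero, Fin.cons_succ, one_smul, smul_neg]
    induction k using Fin.cases with
    | zero =>
        simp [Finset.sum_neg_distrib]
    | succ j =>
        have := hz j
        simp only [sub_smul, one_smul, Finset.sum_sub_distrib] at this
        have h2 : ∀ s : Fin n,
            q ^ (-(2 : ℤ) * ((j : ℕ) + 1) * ((s : ℕ) + 1)) • z s
              = (r ^ ((s : ℕ) + 1)) ^ ((j.succ : Fin (n+1)) : ℕ) • z s := by
          intro s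
          rw [hcoef]
          norm_num
        rw [Finset.sum_congr rfl (fun s _ => h2 s)] at this
        rw [Finset.sum_neg_distrib]
        linear_combination (norm := abel) this
  have hw0 := aux_inv_matrix A hAdet w hsys
  intro s
  rw [← Submodule.Quotient.mk_eq_zero V]
  have := hw0 s.succ
  simp only [hw_def, Fin.cons_succ, neg_eq_zero] at this
  exact this
end

section
/- Let A₁ be the unital associative ℚ-algebra generated by e₁, …, e₆ subject to: all pairs of generators commute except e₃e₁ = e₁e₃ - 3e₂, e₅e₁ = e₁e₅ - 2e₃, e₅e₃ = e₃e₅ - 3e₄, e₆e₁ = e₁e₆ - e₅, e₆e₂ = e₂e₆ + e₄; together with e₄² = 1/9 and e₃² = 3e₁e₄ + 3e₂e₅. Let R be the ℚ-algebra generated by f₂,…,f₆ with f₄ central, f₄² = 1/9, f₆f₂ = f₂f₆ + 1, f₅f₃ = f₃f₅ - 1, and all other pairs commuting. Then the assignment f₂ ↦ 9e₂e₄, f₃ ↦ 3e₃e₄, f₄ ↦ e₄, f₅ ↦ e₅, f₆ ↦ e₆ extends to a ℚ-algebra homomorphism R → A₁. -/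
open FreeAlgebra in
/-- Defining relations of the algebra `A₁` on generators
`e₁, …, e₆` (indexed by `0, …, 5`). -/
inductive A1Rel : FreeAlgebra ℚ (Fin 6) → FreeAlgebra ℚ (Fin 6) → Prop
  | r21 : A1Rel (ι ℚ 1 * ι ℚ 0) (ι ℚ 0 * ι ℚ 1)
  | r31 : A1Rel (ι ℚ 2 * ι ℚ 0) (ι ℚ 0 * ι ℚ 2 - 3 * ι ℚ 1)
  | r32 : A1Rel (ι ℚ 2 * ι ℚ 1) (ι ℚ 1 * ι ℚ 2)
  | r41 : A1Rel (ι ℚ 3 * ι ℚ 0) (ι ℚ 0 * ι ℚ 3)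
  | r42 : A1Rel (ι ℚ 3 * ι ℚ 1) (ι ℚ 1 * ι ℚ 3)
  | r43 : A1Rel (ι ℚ 3 * ι ℚ 2) (ι ℚ 2 * ι ℚ 3)
  | r51 : A1Rel (ι ℚ 4 * ι ℚ 0) (ι ℚ 0 * ι ℚ 4 - 2 * ι ℚ 2)
  | r52 : A1Rel (ι ℚ 4 * ι ℚ 1) (ι ℚ 1 * ι ℚ 4)
  | r53 : A1Rel (ι ℚ 4 * ι ℚ 2) (ι ℚ 2 * ι ℚ 4 - 3 * ι ℚ 3)
  | r54 : A1Rel (ι ℚ 4 * ι ℚ 3) (ι ℚ 3 * ι ℚ 4)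
  | r61 : A1Rel (ι ℚ 5 * ι ℚ 0) (ι ℚ 0 * ι ℚ 5 - ι ℚ 4)
  | r62 : A1Rel (ι ℚ 5 * ι ℚ 1) (ι ℚ 1 * ι ℚ 5 + ι ℚ 3)
  | r63 : A1Rel (ι ℚ 5 * ι ℚ 2) (ι ℚ 2 * ι ℚ 5)
  | r64 : A1Rel (ι ℚ 5 * ι ℚ 3) (ι ℚ 3 * ι ℚ 5)
  | r65 : A1Rel (ι ℚ 5 * ι ℚ 4) (ι ℚ 4 * ι ℚ 5)
  | r44 : A1Rel (ι ℚ 3 * ι ℚ 3) (algebraMap ℚ (FreeAlgebra ℚ (Fin 6)) (1 / 9))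
  | r33 : A1Rel (ι ℚ 2 * ι ℚ 2) (3 * ι ℚ 0 * ι ℚ 3 + 3 * ι ℚ 1 * ι ℚ 4)

/-- The presented algebra `A₁`. -/
abbrev A1alg : Type := RingQuot A1Rel

/-- The generators `e₁, …, e₆` of `A₁` (indexed by `0, …, 5`). -/
noncomputable def egen (i : Fin 6) : A1alg :=
  RingQuot.mkAlgHom ℚ A1Rel (FreeAlgebra.ι ℚ i)

open FreeAlgebra in
/-- Defining relations of the algebra `R` on generators
`f₂, f₃, f₄, f₅, f₆` (indexed by `0, 1, 2, 3, 4`). -/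
inductive RRel : FreeAlgebra ℚ (Fin 5) → FreeAlgebra ℚ (Fin 5) → Prop
  | r32 : RRel (ι ℚ 1 * ι ℚ 0) (ι ℚ 0 * ι ℚ 1)
  | r52 : RRel (ι ℚ 3 * ι ℚ 0) (ι ℚ 0 * ι ℚ 3)
  | r63 : RRel (ι ℚ 4 * ι ℚ 1) (ι ℚ 1 * ι ℚ 4)
  | r65 : RRel (ι ℚ 4 * ι ℚ 3) (ι ℚ 3 * ι ℚ 4)
  | r42 : RRel (ι ℚ 2 * ι ℚ 0) (ι ℚ 0 * ι ℚ 2)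
  | r43 : RRel (ι ℚ 2 * ι ℚ 1) (ι ℚ 1 * ι ℚ 2)
  | r45 : RRel (ι ℚ 2 * ι ℚ 3) (ι ℚ 3 * ι ℚ 2)
  | r46 : RRel (ι ℚ 2 * ι ℚ 4) (ι ℚ 4 * ι ℚ 2)
  | r62 : RRel (ι ℚ 4 * ι ℚ 0) (ι ℚ 0 * ι ℚ 4 + 1)
  | r53 : RRel (ι ℚ 3 * ι ℚ 1) (ι ℚ 1 * ι ℚ 3 - 1)
  | r44 : RRel (ι ℚ 2 * ι ℚ 2) (algebraMap ℚ (FreeAlgebra ℚ (Fin 5)) (1 / 9))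

/-- The presented algebra `R`. -/
abbrev Ralg : Type := RingQuot RRel

/-- The generators `f₂, f₃, f₄, f₅, f₆` of `R` (indexed by `0,…,4`). -/
noncomputable def fgen (i : Fin 5) : Ralg :=
  RingQuot.mkAlgHom ℚ RRel (FreeAlgebra.ι ℚ i)

noncomputable def gmap : Fin 5 → A1alg := fun i =>
  match i with
  | 0 => (9:ℚ) • (egen 1 * egen 3)
  | 1 => (3:ℚ) • (egen 2 * egen 3)
  | 2 => egen 3
  | 3 => egen 4
  | 4 => egen 5

lemma arel {x y : FreeAlgebra ℚ (Fin 6)} (h : A1Rel x y) :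
    RingQuot.mkAlgHom ℚ A1Rel x = RingQuot.mkAlgHom ℚ A1Rel y :=
  RingQuot.mkAlgHom_rel ℚ h

lemma h21 : egen 2 * egen 1 = egen 1 * egen 2 := by
  simpa [egen, map_mul] using arel A1Rel.r32
lemma h31 : egen 3 * egen 1 = egen 1 * egen 3 := by
  simpa [egen, map_mul] using arel A1Rel.r42
lemma h32 : egen 3 * egen 2 = egen 2 * egen 3 := by
  simpa [egen, map_mul] using arel A1Rel.r43
lemma h41 : egen 4 * egen 1 = egen 1 * egen 4 := by
  simpa [egen, map_mul] using arel A1Rel.r52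
lemma h43 : egen 4 * egen 3 = egen 3 * egen 4 := by
  simpa [egen, map_mul] using arel A1Rel.r54
lemma h51 : egen 5 * egen 1 = egen 1 * egen 5 + egen 3 := by
  simpa [egen, map_mul, map_add] using arel A1Rel.r62
lemma h52 : egen 5 * egen 2 = egen 2 * egen 5 := by
  simpa [egen, map_mul] using arel A1Rel.r63
lemma h53 : egen 5 * egen 3 = egen 3 * egen 5 := by
  simpa [egen, map_mul] using arel A1Rel.r64
lemma h54 : egen 5 * egen 4 = egen 4 * egen 5 := by
  simpa [egen, map_mul] using arel A1Rel.r65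
lemma h42 : egen 4 * egen 2 = egen 2 * egen 4 - 3 * egen 3 := by
  simpa [egen, map_mul, map_sub, map_ofNat] using arel A1Rel.r53
lemma h33 : egen 3 * egen 3 = algebraMap ℚ A1alg (1/9) := by
  simpa [egen, map_mul, AlgHom.commutes] using arel A1Rel.r44

lemma h21' (x : A1alg) : egen 2 * (egen 1 * x) = egen 1 * (egen 2 * x) := by
  rw [← mul_assoc, h21, mul_assoc]
lemma h31' (x : A1alg) : egen 3 * (egen 1 * x) = egen 1 * (egen 3 * x) := by
  rw [← mul_assoc, h31, mul_assoc]
lemma h32' (x : A1alg) : egen 3 * (egen 2 * x) = egen 2 * (egen 3 * x) := by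
  rw [← mul_assoc, h32, mul_assoc]
lemma h41' (x : A1alg) : egen 4 * (egen 1 * x) = egen 1 * (egen 4 * x) := by
  rw [← mul_assoc, h41, mul_assoc]
lemma h43' (x : A1alg) : egen 4 * (egen 3 * x) = egen 3 * (egen 4 * x) := by
  rw [← mul_assoc, h43, mul_assoc]
lemma h51' (x : A1alg) : egen 5 * (egen 1 * x) = egen 1 * (egen 5 * x) + egen 3 * x := by
  rw [← mul_assoc, h51, add_mul, mul_assoc]
lemma h52' (x : A1alg) : egen 5 * (egen 2 * x) = egen 2 * (egen 5 * x) := by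
  rw [← mul_assoc, h52, mul_assoc]
lemma h53' (x : A1alg) : egen 5 * (egen 3 * x) = egen 3 * (egen 5 * x) := by
  rw [← mul_assoc, h53, mul_assoc]
lemma h42' (x : A1alg) : egen 4 * (egen 2 * x) = egen 2 * (egen 4 * x) - 3 * (egen 3 * x) := by
  rw [← mul_assoc, h42, sub_mul, mul_assoc, mul_assoc]

lemma smul_algebraMap' (a b : ℚ) :
    a • algebraMap ℚ A1alg b = algebraMap ℚ A1alg (a * b) := by
  rw [Algebra.smul_def, ← map_mul]

lemma three_mul_algebraMap (b : ℚ) :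
    (3 : A1alg) * algebraMap ℚ A1alg b = algebraMap ℚ A1alg (3 * b) := by
  rw [← map_ofNat (algebraMap ℚ A1alg) 3, ← map_mul]

lemma vrel : ∀ ⦃x y : FreeAlgebra ℚ (Fin 5)⦄, RRel x y →
    FreeAlgebra.lift ℚ gmap x = FreeAlgebra.lift ℚ gmap y := by
  intro x y h
  induction h <;>
    simp only [map_mul, map_add, map_one, map_sub, AlgHom.commutes,
      FreeAlgebra.lift_ι_apply, gmap, smul_mul_assoc, mul_smul_comm, mul_assoc]
  case r32 =>
    rw [h31', h21', h32', smul_smul, smul_smul, mul_comm (9:ℚ)]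
  case r52 => rw [h41', h43]
  case r63 => rw [h52', h53]
  case r65 => exact h54
  case r42 => rw [h31']
  case r43 => rw [h32']
  case r45 => exact h43.symm
  case r46 => exact h53.symm
  case r62 =>
    rw [h51', h53, h33, smul_add, smul_algebraMap']
    norm_num
  case r53 =>
    rw [h42', h43, h33, three_mul_algebraMap, smul_sub, smul_algebraMap']
    norm_num
  case r44 => rw [h33]

/-- The assignment `f₂ ↦ 9e₂e₄, f₃ ↦ 3e₃e₄, f₄ ↦ e₄, f₅ ↦ e₅, f₆ ↦ e₆`
extends to a `ℚ`-algebra homomorphism `R → A₁`. -/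
theorem stmt7 :
    ∃ φ : Ralg →ₐ[ℚ] A1alg,
      φ (fgen 0) = 9 * egen 1 * egen 3 ∧
      φ (fgen 1) = 3 * egen 2 * egen 3 ∧
      φ (fgen 2) = egen 3 ∧
      φ (fgen 3) = egen 4 ∧
      φ (fgen 4) = egen 5 := by
  classical
  refine ⟨RingQuot.liftAlgHom ℚ ⟨FreeAlgebra.lift ℚ gmap, vrel⟩, ?_, ?_, ?_, ?_, ?_⟩ <;>
    simp [fgen, RingQuot.liftAlgHom_mkAlgHom_apply, FreeAlgebra.lift_ι_apply, gmap,
      Algebra.smul_def, map_ofNat, mul_assoc]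
end

section
/- Let K be a field, q ∈ K nonzero and not a root of unity. In any associative K-algebra, suppose elements E₄, E₅, E₆ satisfy E₆E₅ = q^{-3}E₅E₆, E₅E₄ = q^{-3}E₄E₅, and E₆E₄ = q^{-3}E₄E₆ + d₁[1] E₅³ where d₁[1] = -(q⁴-2q²+1)/(q⁴+q²+1). Then for all n ∈ ℕ: E₆E₄ⁿ = q^{-3n}E₄ⁿE₆ + d₁[n] E₄^{n-1}E₅³, where d₁[n] = q^{3(1-n)} d₁[1] (1-q^{-6n})/(1-q^{-6}) and d₁[0] = 0 (interpreting the E₄^{n-1} term as 0 when n = 0). -/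
theorem stmt12 (K : Type*) [Field K] (q : K) (hq : q ≠ 0)
    (hroot : ∀ m : ℕ, 0 < m → q ^ m ≠ 1)
    (A : Type*) [Ring A] [Algebra K A] (E4 E5 E6 : A)
    (h65 : E6 * E5 = q ^ (-3 : ℤ) • (E5 * E6))
    (h54 : E5 * E4 = q ^ (-3 : ℤ) • (E4 * E5))
    (h64 : E6 * E4 = q ^ (-3 : ℤ) • (E4 * E6) +
      (-(q ^ 4 - 2 * q ^ 2 + 1) / (q ^ 4 + q ^ 2 + 1)) • E5 ^ 3)
    (d1 : ℕ → K)
    (hd1 : ∀ n : ℕ, d1 n =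
      q ^ ((3 : ℤ) * (1 - (n : ℤ))) *
        (-(q ^ 4 - 2 * q ^ 2 + 1) / (q ^ 4 + q ^ 2 + 1)) *
        ((1 - q ^ (-(6 : ℤ) * (n : ℤ))) / (1 - q ^ (-6 : ℤ)))) :
    ∀ n : ℕ, E6 * E4 ^ n =
      (q ^ (-(3 : ℤ) * (n : ℤ))) • (E4 ^ n * E6) + d1 n • (E4 ^ (n - 1) * E5 ^ 3) := by
  set c : K := -(q ^ 4 - 2 * q ^ 2 + 1) / (q ^ 4 + q ^ 2 + 1) with hc
  clear_value c
  have h6 : (1 : K) - q ^ (-6 : ℤ) ≠ 0 := by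
    intro h
    rw [sub_eq_zero] at h
    have h66 : q ^ (6:ℕ) = 1 := by
      have h2 : (q ^ (6:ℕ))⁻¹ = 1 := by
        rw [← zpow_natCast q 6, ← zpow_neg]
        exact_mod_cast h.symm
      simpa [inv_eq_one] using h2
    exact hroot 6 (by norm_num) h66
  have hd0 : d1 0 = 0 := by rw [hd1]; simp
  have h93 : q ^ (-9:ℤ) * q ^ (3:ℤ) = q ^ (-6:ℤ) := by rw [← zpow_add₀ hq]; norm_num
  have hrec : ∀ n : ℕ, d1 (n+1) = q ^ (-(3:ℤ) * n) * c + q ^ (-9 : ℤ) * d1 n := by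
    intro n
    rw [hd1, hd1]
    push_cast
    rw [show (3:ℤ) * (1 - ((n:ℤ)+1)) = -3 * n by ring,
        show (-(6:ℤ)) * ((n:ℤ)+1) = (-3 * (n:ℤ)) + (-3 * (n:ℤ)) + -6 by ring,
        show (-(6:ℤ)) * (n:ℤ) = (-3 * (n:ℤ)) + (-3 * (n:ℤ)) by ring,
        show (3:ℤ) * (1 - (n:ℤ)) = 3 + -3 * n by ring,
        zpow_add₀ hq ((-3:ℤ) * n + (-3:ℤ) * n) (-6),
        zpow_add₀ hq ((-3:ℤ) * n) ((-3:ℤ) * n),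
        zpow_add₀ hq 3 ((-3:ℤ) * n)]
    have expand : ∀ D : K, q ^ (-9:ℤ) * (q ^ (3:ℤ) * q ^ ((-3:ℤ)*(n:ℤ)) * c * D)
        = q ^ (-6:ℤ) * (q ^ ((-3:ℤ)*(n:ℤ)) * c * D) := by
      intro D; rw [← h93]; ring
    rw [expand]
    generalize q ^ ((-3:ℤ)*(n:ℤ)) = x
    generalize ha : q ^ (-6:ℤ) = a at h6 ⊢
    field_simp
    ring
  -- E5^3 * E4 = q^{-9} • (E4 * E5^3)
  have h534 : E5 ^ 3 * E4 = (q ^ (-9:ℤ)) • (E4 * E5 ^ 3) := by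
    have h1 : E5 ^ 2 * E4 = (q ^ (-6:ℤ)) • (E4 * E5 ^ 2) := by
      calc E5 ^ 2 * E4 = E5 * (E5 * E4) := by rw [sq, mul_assoc]
        _ = E5 * (q ^ (-3:ℤ) • (E4 * E5)) := by rw [h54]
        _ = q ^ (-3:ℤ) • (E5 * E4 * E5) := by rw [mul_smul_comm, mul_assoc]
        _ = q ^ (-3:ℤ) • ((q ^ (-3:ℤ) • (E4 * E5)) * E5) := by rw [h54]
        _ = (q ^ (-3:ℤ) * q ^ (-3:ℤ)) • (E4 * E5 ^ 2) := by
              rw [smul_mul_assoc, smul_smul, mul_assoc, ← sq E5]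
        _ = _ := by rw [← zpow_add₀ hq]; norm_num
    calc E5 ^ 3 * E4 = E5 * (E5 ^ 2 * E4) := by rw [pow_succ', mul_assoc]
      _ = E5 * (q ^ (-6:ℤ) • (E4 * E5 ^ 2)) := by rw [h1]
      _ = q ^ (-6:ℤ) • (E5 * E4 * E5 ^ 2) := by rw [mul_smul_comm, mul_assoc]
      _ = q ^ (-6:ℤ) • ((q ^ (-3:ℤ) • (E4 * E5)) * E5 ^ 2) := by rw [h54]
      _ = (q ^ (-6:ℤ) * q ^ (-3:ℤ)) • (E4 * (E5 * E5 ^ 2)) := by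
            rw [smul_mul_assoc, smul_smul, mul_assoc]
      _ = _ := by rw [← zpow_add₀ hq, ← pow_succ']; norm_num
  intro n
  induction n with
  | zero => simp [hd0]
  | succ n ih =>
    have key : d1 n • (E4 ^ (n-1) * (E4 * E5 ^ 3)) = d1 n • (E4 ^ n * E5 ^ 3) := by
      cases n with
      | zero => simp [hd0]
      | succ m =>
        congr 1
        rw [Nat.succ_sub_one, ← mul_assoc, ← pow_succ]
    calc E6 * E4 ^ (n+1) = (E6 * E4 ^ n) * E4 := by rw [pow_succ, mul_assoc]
      _ = (q ^ (-(3:ℤ) * n) • (E4 ^ n * E6) + d1 n • (E4 ^ (n-1) * E5 ^ 3)) * E4 := by rw [ih]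
      _ = q ^ (-(3:ℤ) * n) • (E4 ^ n * (E6 * E4)) + d1 n • (E4 ^ (n-1) * (E5 ^ 3 * E4)) := by
            rw [add_mul, smul_mul_assoc, smul_mul_assoc, mul_assoc, mul_assoc]
      _ = q ^ (-(3:ℤ) * n) • (E4 ^ n * (q ^ (-3:ℤ) • (E4 * E6) + c • E5 ^ 3))
            + d1 n • (E4 ^ (n-1) * (q ^ (-9:ℤ) • (E4 * E5 ^ 3))) := by rw [h64, h534]
      _ = (q ^ (-(3:ℤ) * n) * q ^ (-3:ℤ)) • (E4 ^ n * (E4 * E6))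
            + (q ^ (-(3:ℤ) * n) * c) • (E4 ^ n * E5 ^ 3)
            + (d1 n * q ^ (-9:ℤ)) • (E4 ^ (n-1) * (E4 * E5 ^ 3)) := by
            rw [mul_add, mul_smul_comm, mul_smul_comm, mul_smul_comm, smul_add, smul_smul,
              smul_smul, smul_smul]
      _ = q ^ (-(3:ℤ) * ((n:ℤ)+1)) • (E4 ^ (n+1) * E6)
            + (q ^ (-(3:ℤ) * n) * c + q ^ (-9:ℤ) * d1 n) • (E4 ^ n * E5 ^ 3) := by
            rw [← zpow_add₀ hq, show (-(3:ℤ) * n + -3) = -3 * ((n:ℤ)+1) by ring,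
              pow_succ E4 n, mul_assoc (E4 ^ n) E4 E6, add_assoc,
              mul_comm (d1 n) (q ^ (-9:ℤ)), mul_smul (q ^ (-9:ℤ)) (d1 n), key,
              ← mul_smul, ← add_smul]
      _ = _ := by
            rw [← hrec n]
            push_cast
            simp
end

section
/- Let K be a field, q ∈ K nonzero and not a root of unity. In any associative K-algebra, suppose E₁, E₂, E₃ satisfy E₂E₁ = q^{-3}E₁E₂, E₃E₂ = q^{-3}E₂E₃, and E₃E₁ = q^{-1}E₁E₃ + d₂[1] E₂ where d₂[1] = -(q+q^{-1}+q^{-3}). Then for all n ∈ ℕ: E₃E₁ⁿ = q^{-n}E₁ⁿE₃ + d₂[n] E₁^{n-1}E₂, where d₂[n] = q^{1-n} d₂[1] (1-q^{-2n})/(1-q^{-2}) and d₂[0] = 0 (interpreting the E₁^{n-1} term as 0 when n = 0). -/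
theorem stmt13 (K : Type*) [Field K] (q : K) (hq : q ≠ 0)
    (hroot : ∀ m : ℕ, 0 < m → q ^ m ≠ 1)
    (A : Type*) [Ring A] [Algebra K A] (E1 E2 E3 : A)
    (h21 : E2 * E1 = q ^ (-3 : ℤ) • (E1 * E2))
    (h32 : E3 * E2 = q ^ (-3 : ℤ) • (E2 * E3))
    (h31 : E3 * E1 = q ^ (-1 : ℤ) • (E1 * E3) +
      (-(q + q ^ (-1 : ℤ) + q ^ (-3 : ℤ))) • E2)
    (d2 : ℕ → K)
    (hd2 : ∀ n : ℕ, d2 n =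
      q ^ (1 - (n : ℤ)) * (-(q + q ^ (-1 : ℤ) + q ^ (-3 : ℤ))) *
        ((1 - q ^ (-(2 : ℤ) * (n : ℤ))) / (1 - q ^ (-2 : ℤ)))) :
    ∀ n : ℕ, E3 * E1 ^ n =
      (q ^ (-(n : ℤ))) • (E1 ^ n * E3) + d2 n • (E1 ^ (n - 1) * E2) := by
  have h2 : (1 : K) - q ^ (-2 : ℤ) ≠ 0 := by
    have hq2 : q ^ (2 : ℕ) ≠ 1 := hroot 2 two_pos
    intro h
    apply hq2
    have h' : q ^ (-2 : ℤ) = 1 := (sub_eq_zero.mp h).symm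
    rw [zpow_neg, inv_eq_one] at h'
    rw [← zpow_natCast]
    exact_mod_cast h'
  have hd20 : d2 0 = 0 := by
    rw [hd2 0]
    norm_num
  have hmul : ∀ m : ℕ, (1 - q ^ (-2 : ℤ)) * d2 m =
      q ^ (1 - (m : ℤ)) * (-(q + q ^ (-1 : ℤ) + q ^ (-3 : ℤ))) *
        (1 - q ^ (-(2 : ℤ) * (m : ℤ))) := by
    intro m
    rw [hd2 m, mul_comm, mul_assoc, div_mul_cancel₀ _ h2]
  have hrec : ∀ n : ℕ, d2 (n + 1) =
      q ^ (-(n : ℤ)) * (-(q + q ^ (-1 : ℤ) + q ^ (-3 : ℤ))) + q ^ (-3 : ℤ) * d2 n := by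
    intro n
    apply mul_left_cancel₀ h2
    rw [hmul (n + 1)]
    rw [show (1 - q ^ (-2 : ℤ)) * (q ^ (-(n : ℤ)) * (-(q + q ^ (-1 : ℤ) + q ^ (-3 : ℤ))) +
        q ^ (-3 : ℤ) * d2 n) =
        (1 - q ^ (-2 : ℤ)) * (q ^ (-(n : ℤ)) * (-(q + q ^ (-1 : ℤ) + q ^ (-3 : ℤ)))) +
        q ^ (-3 : ℤ) * ((1 - q ^ (-2 : ℤ)) * d2 n) by ring]
    rw [hmul n]
    push_cast
    rw [show (1 : ℤ) - ((n : ℤ) + 1) = -(n : ℤ) by ring,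
      show (-2 : ℤ) * ((n : ℤ) + 1) = -2 + (-(n : ℤ) + -(n : ℤ)) by ring,
      show (1 : ℤ) - (n : ℤ) = 3 + (-2 + -(n : ℤ)) by ring,
      show (-2 : ℤ) * (n : ℤ) = -(n : ℤ) + -(n : ℤ) by ring,
      zpow_add₀ hq, zpow_add₀ hq, zpow_add₀ hq, zpow_add₀ hq]
    have c5 : q ^ (-3 : ℤ) * q ^ (3 : ℤ) = 1 := by
      rw [← zpow_add₀ hq]; norm_num
    linear_combination (-(q ^ (-2 : ℤ) * q ^ (-(n : ℤ)) *
      (-(q + q ^ (-1 : ℤ) + q ^ (-3 : ℤ))) *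
      (1 - q ^ (-(n : ℤ)) * q ^ (-(n : ℤ))))) * c5
  intro n
  induction n with
  | zero => simp [hd20]
  | succ n ih =>
    have key : d2 n • (E1 ^ (n - 1) * E2 * E1) = (q ^ (-3 : ℤ) * d2 n) • (E1 ^ n * E2) := by
      cases n with
      | zero => simp [hd20]
      | succ m =>
        simp only [Nat.add_sub_cancel]
        rw [mul_assoc, h21, mul_smul_comm, ← mul_assoc, ← pow_succ, smul_smul, mul_comm (d2 _)]
    calc E3 * E1 ^ (n + 1) = (E3 * E1 ^ n) * E1 := by rw [pow_succ, mul_assoc]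
      _ = q ^ (-(n : ℤ)) • (E1 ^ n * (E3 * E1)) + d2 n • (E1 ^ (n - 1) * E2 * E1) := by
          rw [ih]; simp [add_mul, smul_mul_assoc, mul_assoc]
      _ = q ^ (-(n : ℤ)) • (E1 ^ n * (q ^ (-1 : ℤ) • (E1 * E3) +
            (-(q + q ^ (-1 : ℤ) + q ^ (-3 : ℤ))) • E2)) + (q ^ (-3 : ℤ) * d2 n) • (E1 ^ n * E2) := by
          rw [h31, key]
      _ = (q ^ (-((n : ℕ) + 1 : ℤ))) • (E1 ^ (n + 1) * E3) +
            (q ^ (-(n : ℤ)) * (-(q + q ^ (-1 : ℤ) + q ^ (-3 : ℤ))) + q ^ (-3 : ℤ) * d2 n) •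
              (E1 ^ n * E2) := by
          rw [mul_add, mul_smul_comm, mul_smul_comm, smul_add, smul_smul, smul_smul, add_smul,
            ← mul_assoc, ← pow_succ]
          rw [show -((n : ℕ) + 1 : ℤ) = -(n : ℤ) + (-1) by push_cast; ring, zpow_add₀ hq]
          abel
      _ = _ := by
          rw [hrec n]
          push_cast
          simp
end
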